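/- arXiv:2601.19058 — 2 statements merged into one kernel-verified Lean document; each statement's English description precedes it below -/
import Mathlib

section
/- Let y = Φ(x) with x ∈ X, and let ψ_0: Z → ℝ be ψ_0(z) = −2 if z_0 = β and 0 if z_0 = α. Then for every d ∈ ℕ, the Birkhoff sum satisfies S_d ψ_0(y) ≤ −2 ν(A) d + 4 + 2 log_2 d, where S_d ψ_0(y) = Σ_{i=0}^{d-1} ψ_0(σ^i y) and ν is the Bernoulli(1/2,1/2) measure on X. -/
open MeasureTheory Filter Topology
open scoped ENNReal

/-- The odometer map on `X = {0,1}^ℕ` (adding one with carry in binary). -/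
def Tod (x : ℕ → Bool) : ℕ → Bool := fun k =>
  if ∀ i < k, x i = true then !(x k) else x k

/-- The inverse of the odometer map (subtracting one with borrow). -/
def TodInv (x : ℕ → Bool) : ℕ → Bool := fun k =>
  if ∀ i < k, x i = false then !(x k) else x k

/-- The number determined by the first `k` binary digits of `x`. -/
def DN (k : ℕ) (x : ℕ → Bool) : ℕ := ∑ i ∈ Finset.range k, 2 ^ i * (x i).toNat

/-- The cylinder `[0^i]` of sequences starting with `i` zeros. -/
def cyl0 (i : ℕ) : Set (ℕ → Bool) := {x | ∀ j < i, x j = false}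

/-- `A = ⋃_{i=5}^∞ ⋃_{j=0}^{i-1} T^j([0^i])`. -/
def Aset : Set (ℕ → Bool) := ⋃ (i : ℕ) (_ : 5 ≤ i) (j : ℕ) (_ : j < i), Tod^[j] '' cyl0 i

/-- `A_k = ⋃_{i=5}^{k} ⋃_{j=0}^{i-1} T^j([0^i])`. -/
def Ak (k : ℕ) : Set (ℕ → Bool) :=
  ⋃ (i : ℕ) (_ : 5 ≤ i) (_ : i ≤ k) (j : ℕ) (_ : j < i), Tod^[j] '' cyl0 i

/-- `E_k = ⋃_{i=k+1}^∞ ⋃_{j=0}^{i-1} T^j([0^i])`. -/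
def Ek (k : ℕ) : Set (ℕ → Bool) :=
  ⋃ (i : ℕ) (_ : k + 1 ≤ i) (j : ℕ) (_ : j < i), Tod^[j] '' cyl0 i

/-- `T^n` for `n : ℤ` (using the inverse odometer for negative `n`). -/
def zIter (n : ℤ) (x : ℕ → Bool) : ℕ → Bool :=
  if 0 ≤ n then Tod^[n.toNat] x else TodInv^[(-n).toNat] x

/-- The factor map `Φ : X → Z = {α,β}^ℤ`, with `β = true`, `α = false`:
`Φ(x)_n = β` iff `T^n(x) ∈ A`. -/
noncomputable def Phi (x : ℕ → Bool) : ℤ → Bool := fun n =>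
  @decide (zIter n x ∈ Aset) (Classical.propDecidable _)

/-- The subshift `Y`, the closure of `Φ(X)` in the full two-sided shift. -/
def Ysub : Set (ℤ → Bool) := closure (Set.range Phi)

/-- The shift map on `Z = {α,β}^ℤ`. -/
def shiftZ (z : ℤ → Bool) : ℤ → Bool := fun n => z (n + 1)

/-- The cylinder in `Z` given by a word `w` of length `n` placed at positions `0,…,n-1`. -/
def cylZ (n : ℕ) (w : Fin n → Bool) : Set (ℤ → Bool) :=
  {z | ∀ i : Fin n, z ((i : ℕ) : ℤ) = w i}

/-- The potential `ψ_0(z) = −2` if `z_0 = β`, `0` if `z_0 = α`. -/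
def psi0 (z : ℤ → Bool) : ℝ := if z 0 = true then -2 else 0

/-!
The Birkhoff sum is `-2` times the number of visits of the odometer orbit of `x` to `A` before
time `d`. Split `A` into the sets `B_m = A_m ∖ A_{m-1}` (`m ≥ 5`) of points entering `A` first at
level `m`: `B_m` is a union of cylinders of length `m`, a single one when `m ≥ 6`, and since the
odometer acts on the first `m` digits as `+1 mod 2^m`, the orbit visits each such cylinder at least
`⌊d / 2^m⌋` times in `d` steps. For `k = ⌊log₂ d⌋ ≥ 5`, the levels `5 … k` thus cost at most one
visit per cylinder, `k` in total, while the levels above `k` have measure at most `2^{-k} ≤ 2 / d`.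
For `d < 32` the bound `ν(A) ≤ 3/16` suffices.
-/

open Finset

lemma DN_succ (n : ℕ) (x : ℕ → Bool) : DN (n + 1) x = DN n x + 2 ^ n * (x n).toNat :=
  sum_range_succ _ n

lemma DN_lt_two_pow (n : ℕ) (x : ℕ → Bool) : DN n x < 2 ^ n := by
  induction n with
  | zero => simp [DN]
  | succ n ih =>
    rw [DN_succ, pow_succ]
    have hbit := Bool.toNat_le (x n)
    nlinarith

lemma DN_mod_two_pow {m n : ℕ} (hmn : m ≤ n) (x : ℕ → Bool) : DN n x % 2 ^ m = DN m x := by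
  induction n, hmn using Nat.le_induction with
  | base => exact Nat.mod_eq_of_lt (DN_lt_two_pow m x)
  | succ n hmn ih =>
    obtain ⟨c, hc⟩ : 2 ^ m ∣ 2 ^ n := pow_dvd_pow 2 hmn
    rw [DN_succ, hc, mul_assoc, Nat.add_mul_mod_self_left, ih]

lemma DN_succ_div_two_pow (n : ℕ) (x : ℕ → Bool) : DN (n + 1) x / 2 ^ n = (x n).toNat := by
  rw [DN_succ, Nat.add_mul_div_left _ _ (Nat.two_pow_pos n),
    Nat.div_eq_of_lt (DN_lt_two_pow n x), zero_add]

lemma DN_eq_DN_iff {n : ℕ} {x y : ℕ → Bool} : DN n x = DN n y ↔ ∀ i < n, x i = y i := by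
  induction n with
  | zero => simp [DN]
  | succ n ih =>
    rw [Nat.forall_lt_succ_right, ← ih]
    refine ⟨fun h => ⟨?_, ?_⟩, fun ⟨h, hn⟩ => by rw [DN_succ, DN_succ, h, hn]⟩
    · rw [← DN_mod_two_pow n.le_succ, h, DN_mod_two_pow n.le_succ]
    · have hbit := congrArg (· / 2 ^ n) h
      simp only [DN_succ_div_two_pow] at hbit
      revert hbit
      cases x n <;> cases y n <;> simp

lemma mem_cyl0_iff {i : ℕ} {y : ℕ → Bool} : y ∈ cyl0 i ↔ DN i y = 0 := by
  have : DN i (fun _ => false) = 0 := by simp [DN]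
  rw [← this, DN_eq_DN_iff, cyl0, Set.mem_ofPred_eq]

lemma forall_lt_eq_true_iff_DN (n : ℕ) (x : ℕ → Bool) :
    (∀ i < n, x i = true) ↔ DN n x + 1 = 2 ^ n := by
  induction n with
  | zero => simp [DN]
  | succ n ih =>
    rw [Nat.forall_lt_succ_right, ih, DN_succ, pow_succ]
    have hlt := DN_lt_two_pow n x
    cases x n <;> simp <;> omega

lemma DN_Tod (n : ℕ) (x : ℕ → Bool) : DN n (Tod x) = (DN n x + 1) % 2 ^ n := by
  induction n with
  | zero => simp [DN]
  | succ n ih =>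
    have hlt := DN_lt_two_pow n x
    have hTod : Tod x n = if DN n x + 1 = 2 ^ n then !x n else x n := by
      simp only [Tod, forall_lt_eq_true_iff_DN]
    rw [DN_succ, DN_succ, ih, hTod, add_right_comm, pow_succ]
    by_cases hcarry : DN n x + 1 = 2 ^ n
    · rw [if_pos hcarry, hcarry, Nat.mod_self]
      cases x n
      · simp [Nat.mod_eq_of_lt (show 2 ^ n < 2 ^ n * 2 by omega)]
      · simp [← mul_two]
    · rw [if_neg hcarry, Nat.mod_eq_of_lt (by omega), Nat.mod_eq_of_lt]
      have hbit := Bool.toNat_le (x n)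
      have hnocarry : DN n x + 1 < 2 ^ n := by omega
      nlinarith

lemma DN_iterate_Tod (n j : ℕ) (x : ℕ → Bool) : DN n (Tod^[j] x) = (DN n x + j) % 2 ^ n := by
  induction j with
  | zero => simp [Nat.mod_eq_of_lt (DN_lt_two_pow n x)]
  | succ j ih => rw [Function.iterate_succ_apply', DN_Tod, ih, Nat.mod_add_mod, add_assoc]

lemma forall_lt_TodInv_eq_true_iff (k : ℕ) (x : ℕ → Bool) :
    (∀ i < k, TodInv x i = true) ↔ ∀ i < k, x i = false := by
  induction k with
  | zero => simp
  | succ k ih =>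
    rw [Nat.forall_lt_succ_right, Nat.forall_lt_succ_right, ih]
    exact and_congr_right fun h => by simp only [TodInv, if_pos h]; simp

lemma Tod_TodInv (x : ℕ → Bool) : Tod (TodInv x) = x := by
  funext k
  simp only [Tod, forall_lt_TodInv_eq_true_iff]
  unfold TodInv
  split_ifs <;> simp

lemma image_iterate_Tod_cyl0 {i j : ℕ} (hj : j < 2 ^ i) :
    Tod^[j] '' cyl0 i = {x | DN i x = j} := by
  ext x
  constructor
  · rintro ⟨y, hy, rfl⟩
    rw [Set.mem_ofPred_eq, DN_iterate_Tod, mem_cyl0_iff.mp hy, zero_add, Nat.mod_eq_of_lt hj]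
  · intro hx
    have hinv : Tod^[j] (TodInv^[j] x) = x := (Function.LeftInverse.iterate Tod_TodInv j) x
    refine ⟨TodInv^[j] x, mem_cyl0_iff.mpr ?_, hinv⟩
    have hmod := DN_iterate_Tod i j (TodInv^[j] x)
    rw [hinv, hx] at hmod
    have hzero : DN i (TodInv^[j] x) ≡ 0 [MOD 2 ^ i] :=
      Nat.ModEq.add_right_cancel' j (by rw [Nat.ModEq, ← hmod, zero_add, Nat.mod_eq_of_lt hj])
    rwa [Nat.ModEq, Nat.mod_eq_of_lt (DN_lt_two_pow _ _), Nat.zero_mod] at hzero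

lemma mem_Aset_iff {x : ℕ → Bool} : x ∈ Aset ↔ ∃ i, 5 ≤ i ∧ DN i x < i := by
  simp only [Aset, Set.mem_iUnion, exists_prop]
  refine exists_congr fun i => and_congr_right fun _ => ⟨?_, fun h => ⟨DN i x, h, ?_⟩⟩
  · rintro ⟨j, hj, hx⟩
    rw [image_iterate_Tod_cyl0 (hj.trans Nat.lt_two_pow_self), Set.mem_ofPred_eq] at hx
    exact hx ▸ hj
  · rw [image_iterate_Tod_cyl0 (h.trans Nat.lt_two_pow_self)]
    rfl

lemma div_le_card_filter_add_mod_eq {m r : ℕ} (hr : r < m) (c d : ℕ) :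
    d / m ≤ #{n ∈ range d | (c + n) % m = r} := by
  have hm : 0 < m := by omega
  set a := (r + m - c % m) % m
  have ha : (c + a) % m = r := by
    have hcm := Nat.mod_lt c hm
    rw [Nat.add_mod_mod, ← Nat.mod_add_mod, Nat.add_sub_cancel' (by omega), Nat.add_mod_right,
      Nat.mod_eq_of_lt hr]
  rw [← card_range (d / m)]
  refine card_le_card_of_injOn (fun t => a + t * m) (fun t ht => ?_) (fun s _ t _ hst => ?_)
  · have ham : a < m := Nat.mod_lt _ hm
    have hmul : (t + 1) * m ≤ d :=
      (Nat.mul_le_mul_right m (mem_range.mp ht)).trans (Nat.div_mul_le_self d m)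
    simp only [coe_filter, mem_range, Set.mem_ofPred_eq]
    refine ⟨by nlinarith, ?_⟩
    rw [← add_assoc, Nat.add_mul_mod_self_right, ha]
  · exact Nat.eq_of_mul_eq_mul_right hm (Nat.add_left_cancel hst)

lemma card_mul_div_le_card_filter_add_mod_mem {m : ℕ} {R : Finset ℕ} (hR : ∀ r ∈ R, r < m)
    (c d : ℕ) : #R * (d / m) ≤ #{n ∈ range d | (c + n) % m ∈ R} := by
  have hfiber : ∀ r ∈ R, d / m ≤ #{n ∈ {n ∈ range d | (c + n) % m ∈ R} | (c + n) % m = r} := by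
    intro r hr
    rw [filter_filter]
    refine (div_le_card_filter_add_mod_eq (hR r hr) c d).trans_eq (congrArg card ?_)
    exact filter_congr fun n _ => ⟨fun h => ⟨h ▸ hr, h⟩, And.right⟩
  have hmaps : Set.MapsTo (fun n => (c + n) % m) ({n ∈ range d | (c + n) % m ∈ R} : Finset ℕ) R :=
    fun n hn => (mem_filter.mp hn).2
  rw [card_eq_sum_card_fiberwise hmaps, ← smul_eq_mul]
  exact card_nsmul_le_sum _ _ _ hfiber

def Bdigits (m : ℕ) : Finset ℕ := {r ∈ range m | ∀ l ∈ (Ico 5 m : Finset ℕ), l ≤ r % 2 ^ l}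

/-- The paper's `B_m = A_m ∖ A_{m-1}`, the points whose first level in `A` is `m`, written as the
union of the cylinders of length `m` whose digits lie in `Bdigits m`. -/
def Bset (m : ℕ) : Set (ℕ → Bool) := {y | DN m y ∈ Bdigits m}

lemma mem_Bset_iff {m : ℕ} {y : ℕ → Bool} :
    y ∈ Bset m ↔ DN m y < m ∧ ∀ l ∈ Ico 5 m, l ≤ DN l y := by
  simp only [Bset, Bdigits, Set.mem_ofPred_eq, mem_filter, mem_range]
  exact and_congr_right fun _ => forall₂_congr fun l hl => by
    rw [DN_mod_two_pow (mem_Ico.mp hl).2.le]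

lemma Bset_subset_Aset {m : ℕ} (hm : 5 ≤ m) : Bset m ⊆ Aset :=
  fun _ hy => mem_Aset_iff.mpr ⟨m, hm, (mem_Bset_iff.mp hy).1⟩

lemma disjoint_Bset {l m : ℕ} (hl : 5 ≤ l) (hlm : l < m) : Disjoint (Bset l) (Bset m) :=
  Set.disjoint_left.mpr fun _ hyl hym =>
    ((mem_Bset_iff.mp hym).2 l (mem_Ico.mpr ⟨hl, hlm⟩)).not_gt (mem_Bset_iff.mp hyl).1

lemma Aset_subset_iUnion_Bset : Aset ⊆ ⋃ m, ⋃ (_ : 5 ≤ m), Bset m := by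
  intro y hy
  have h := mem_Aset_iff.mp hy
  simp only [Set.mem_iUnion]
  refine ⟨Nat.find h, (Nat.find_spec h).1, mem_Bset_iff.mpr ⟨(Nat.find_spec h).2, fun l hl => ?_⟩⟩
  exact not_lt.mp fun hlt => Nat.find_min h (mem_Ico.mp hl).2 ⟨(mem_Ico.mp hl).1, hlt⟩

lemma card_Bdigits_le (m : ℕ) : #(Bdigits m) ≤ m :=
  (card_filter_le _ _).trans (card_range m).le

/-- Having missed level `m - 1`, a point entering `A` at level `m ≥ 6` has `m`-digit number
`m - 1`. -/
lemma card_Bdigits_le_one {m : ℕ} (hm : 6 ≤ m) : #(Bdigits m) ≤ 1 := by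
  have hdigit : ∀ r ∈ Bdigits m, r = m - 1 := by
    intro r hr
    simp only [Bdigits, mem_filter, mem_range, mem_Ico] at hr
    have hmiss := hr.2 (m - 1) ⟨by omega, by omega⟩
    have : m - 1 < 2 ^ (m - 1) := Nat.lt_two_pow_self
    rw [Nat.mod_eq_of_lt (by omega)] at hmiss
    omega
  exact card_le_one.mpr fun a ha b hb => (hdigit a ha).trans (hdigit b hb).symm

lemma sum_card_Bdigits_le {k : ℕ} (hk : 5 ≤ k) : ∑ m ∈ Icc 5 k, #(Bdigits m) ≤ k := by
  induction k, hk using Nat.le_induction with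
  | base => simpa using card_Bdigits_le 5
  | succ k hk ih =>
    rw [sum_Icc_succ_top (by omega)]
    have hlast := card_Bdigits_le_one (show 6 ≤ k + 1 by omega)
    omega

open scoped Classical in
noncomputable def visitCount (x : ℕ → Bool) (d : ℕ) (S : Set (ℕ → Bool)) : ℕ :=
  #{n ∈ range d | Tod^[n] x ∈ S}

lemma card_mul_div_le_visitCount_DN_mem {i : ℕ} {R : Finset ℕ} (hR : ∀ r ∈ R, r < 2 ^ i)
    (x : ℕ → Bool) (d : ℕ) : #R * (d / 2 ^ i) ≤ visitCount x d {y | DN i y ∈ R} := by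
  refine (card_mul_div_le_card_filter_add_mod_mem hR (DN i x) d).trans_eq ?_
  simp only [visitCount, Set.mem_ofPred_eq, DN_iterate_Tod]

lemma sum_visitCount_Bset_le (x : ℕ → Bool) (d k : ℕ) :
    ∑ m ∈ Icc 5 k, visitCount x d (Bset m) ≤ visitCount x d Aset := by
  classical
  unfold visitCount
  rw [← card_biUnion]
  · refine card_le_card fun n hn => ?_
    simp only [mem_biUnion, mem_filter, mem_Icc] at hn ⊢
    obtain ⟨m, ⟨hm, -⟩, hn, hmem⟩ := hn
    exact ⟨hn, Bset_subset_Aset hm hmem⟩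
  · intro l hl m hm hlm
    refine disjoint_filter.mpr fun n _ hnl hnm => ?_
    rcases lt_or_gt_of_ne hlm with h | h
    · exact Set.disjoint_left.mp (disjoint_Bset (mem_Icc.mp hl).1 h) hnl hnm
    · exact Set.disjoint_left.mp (disjoint_Bset (mem_Icc.mp hm).1 h) hnm hnl

lemma natCast_mul_inv_two_pow_le (d m : ℕ) : (d : ℝ) * 2⁻¹ ^ m ≤ (d / 2 ^ m : ℕ) + 1 := by
  have h := Nat.lt_floor_add_one ((d : ℝ) / (2 ^ m : ℕ))
  rw [Nat.floor_div_eq_div] at h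
  push_cast at h
  rw [inv_pow, ← div_eq_mul_inv]
  exact h.le

def IsBernoulliHalf (ν : Measure (ℕ → Bool)) : Prop :=
  ∀ (n : ℕ) (a : ℕ → Bool), ν {x | ∀ i < n, x i = a i} = (2 : ℝ≥0∞)⁻¹ ^ n

section Bernoulli

variable {ν : Measure (ℕ → Bool)}

lemma measure_DN_eq_le (hν : IsBernoulliHalf ν) (i r : ℕ) : ν {y | DN i y = r} ≤ 2⁻¹ ^ i := by
  rcases Set.eq_empty_or_nonempty {y | DN i y = r} with h | ⟨a, ha⟩
  · simp [h]
  · have hcyl : {y | DN i y = r} = {y | ∀ k < i, y k = a k} := by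
      ext y
      rw [Set.mem_ofPred_eq, Set.mem_ofPred_eq, ← DN_eq_DN_iff, ha]
    rw [hcyl, hν]

lemma measure_DN_mem_le (hν : IsBernoulliHalf ν) (i : ℕ) (R : Finset ℕ) :
    ν {y | DN i y ∈ R} ≤ (#R : ℝ≥0∞) * 2⁻¹ ^ i :=
  calc ν {y | DN i y ∈ R} = ν (⋃ r ∈ R, {y | DN i y = r}) := by congr 1; ext; simp
    _ ≤ ∑ r ∈ R, ν {y | DN i y = r} := measure_biUnion_finset_le _ _
    _ ≤ ∑ _r ∈ R, 2⁻¹ ^ i := sum_le_sum fun r _ => measure_DN_eq_le hν i r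
    _ = #R * 2⁻¹ ^ i := by rw [sum_const, nsmul_eq_mul]

lemma measure_iUnion_Bset_le (hν : IsBernoulliHalf ν) {k : ℕ} (hk : 5 ≤ k) :
    ν (⋃ j, Bset (k + 1 + j)) ≤ 2⁻¹ ^ k :=
  calc ν (⋃ j, Bset (k + 1 + j)) ≤ ∑' j, ν (Bset (k + 1 + j)) := measure_iUnion_le _
    _ ≤ ∑' j, 2⁻¹ ^ (k + 1) * 2⁻¹ ^ j := ENNReal.tsum_le_tsum fun j => by
        rw [← pow_add]
        refine (measure_DN_mem_le hν _ _).trans (mul_le_of_le_one_left zero_le ?_)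
        exact_mod_cast card_Bdigits_le_one (show 6 ≤ k + 1 + j by omega)
    _ = 2⁻¹ ^ k := by
        rw [ENNReal.tsum_mul_left, ENNReal.tsum_geometric, ENNReal.one_sub_inv_two, inv_inv,
          pow_succ, mul_assoc, ENNReal.inv_mul_cancel two_ne_zero ENNReal.ofNat_ne_top, mul_one]

lemma measure_Aset_le (hν : IsBernoulliHalf ν) {k : ℕ} (hk : 5 ≤ k) :
    ν Aset ≤ ∑ m ∈ Icc 5 k, (#(Bdigits m) : ℝ≥0∞) * 2⁻¹ ^ m + 2⁻¹ ^ k := by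
  have hcover : Aset ⊆ (⋃ m ∈ Icc 5 k, Bset m) ∪ ⋃ j, Bset (k + 1 + j) := by
    refine Aset_subset_iUnion_Bset.trans fun y hy => ?_
    simp only [Set.mem_iUnion, Set.mem_union, mem_Icc] at hy ⊢
    obtain ⟨m, hm, hy⟩ := hy
    rcases le_or_gt m k with hmk | hkm
    · exact Or.inl ⟨m, ⟨hm, hmk⟩, hy⟩
    · exact Or.inr ⟨m - (k + 1), by rwa [Nat.add_sub_cancel' hkm]⟩
  calc ν Aset ≤ ν (⋃ m ∈ Icc 5 k, Bset m) + ν (⋃ j, Bset (k + 1 + j)) :=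
        (measure_mono hcover).trans (measure_union_le _ _)
    _ ≤ ∑ m ∈ Icc 5 k, ν (Bset m) + 2⁻¹ ^ k :=
        add_le_add (measure_biUnion_finset_le _ _) (measure_iUnion_Bset_le hν hk)
    _ ≤ ∑ m ∈ Icc 5 k, (#(Bdigits m) : ℝ≥0∞) * 2⁻¹ ^ m + 2⁻¹ ^ k := by
        gcongr with m
        exact measure_DN_mem_le hν m _

lemma measure_Aset_toReal_le (hν : IsBernoulliHalf ν) {k : ℕ} (hk : 5 ≤ k) :
    (ν Aset).toReal ≤ ∑ m ∈ Icc 5 k, (#(Bdigits m) : ℝ) * 2⁻¹ ^ m + 2⁻¹ ^ k := by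
  have hfin : ∑ m ∈ Icc 5 k, (#(Bdigits m) : ℝ≥0∞) * 2⁻¹ ^ m ≠ ⊤ :=
    ENNReal.sum_ne_top.mpr fun m _ => by finiteness
  have h := ENNReal.toReal_mono (ENNReal.add_ne_top.mpr ⟨hfin, by finiteness⟩)
    (measure_Aset_le hν hk)
  rw [ENNReal.toReal_add hfin (by finiteness), ENNReal.toReal_sum fun m _ => by finiteness] at h
  simpa using h

lemma measure_Aset_mul_le_of_five_le (hν : IsBernoulliHalf ν) (x : ℕ → Bool) {d : ℕ}
    (hk : 5 ≤ Nat.log 2 d) :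
    (ν Aset).toReal * d ≤ visitCount x d Aset + Nat.log 2 d + 2 := by
  set k := Nat.log 2 d
  have htail : (d : ℝ) * 2⁻¹ ^ k ≤ 2 := by
    have hdk : (d : ℝ) < 2 ^ (k + 1) := by exact_mod_cast Nat.lt_pow_succ_log_self one_lt_two d
    rw [inv_pow, ← div_eq_mul_inv, div_le_iff₀ (by positivity)]
    linarith [pow_succ (2 : ℝ) k]
  have hvisits : ∑ m ∈ Icc 5 k, #(Bdigits m) * (d / 2 ^ m) ≤ visitCount x d Aset :=
    (sum_le_sum fun m _ => card_mul_div_le_visitCount_DN_mem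
      (fun r hr => (mem_range.mp (mem_filter.mp hr).1).trans Nat.lt_two_pow_self) x d).trans
      (sum_visitCount_Bset_le x d k)
  have hcount : ((∑ m ∈ Icc 5 k, #(Bdigits m) : ℕ) : ℝ) ≤ k := by
    exact_mod_cast sum_card_Bdigits_le hk
  calc (ν Aset).toReal * d
      ≤ (∑ m ∈ Icc 5 k, (#(Bdigits m) : ℝ) * 2⁻¹ ^ m + 2⁻¹ ^ k) * d := by
        gcongr
        exact measure_Aset_toReal_le hν hk
    _ = ∑ m ∈ Icc 5 k, (#(Bdigits m) : ℝ) * (d * 2⁻¹ ^ m) + d * 2⁻¹ ^ k := by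
        rw [add_mul, sum_mul]
        congr 1
        · exact sum_congr rfl fun m _ => by ring
        · ring
    _ ≤ ∑ m ∈ Icc 5 k, (#(Bdigits m) : ℝ) * ((d / 2 ^ m : ℕ) + 1) + 2 := by
        gcongr with m
        exact natCast_mul_inv_two_pow_le d m
    _ = ((∑ m ∈ Icc 5 k, #(Bdigits m) * (d / 2 ^ m) : ℕ) : ℝ)
          + ((∑ m ∈ Icc 5 k, #(Bdigits m) : ℕ) : ℝ) + 2 := by
        push_cast
        simp only [mul_add, mul_one, sum_add_distrib]
    _ ≤ visitCount x d Aset + k + 2 :=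
        add_le_add_three (by exact_mod_cast hvisits) hcount le_rfl

lemma measure_Aset_mul_le (hν : IsBernoulliHalf ν) (x : ℕ → Bool) (d : ℕ) :
    (ν Aset).toReal * d ≤ visitCount x d Aset + Nat.log 2 d + 2 := by
  rcases le_or_gt 5 (Nat.log 2 d) with hk | hk
  · exact measure_Aset_mul_le_of_five_le hν x hk
  have hA : (ν Aset).toReal ≤ 3 / 16 := by
    have hA5 := measure_Aset_toReal_le hν le_rfl
    have hB5 : (#(Bdigits 5) : ℝ) ≤ 5 := by exact_mod_cast card_Bdigits_le 5
    rw [Icc_self, sum_singleton] at hA5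
    linarith
  have hd : 3 * d ≤ 16 * (Nat.log 2 d + 2) := by
    have hdk := Nat.lt_pow_succ_log_self one_lt_two d
    interval_cases Nat.log 2 d <;> omega
  have hd' : (3 : ℝ) * d ≤ 16 * (Nat.log 2 d + 2) := by exact_mod_cast hd
  calc (ν Aset).toReal * d ≤ 3 / 16 * d := by gcongr
    _ ≤ visitCount x d Aset + Nat.log 2 d + 2 := by
        linarith [Nat.cast_nonneg (α := ℝ) (visitCount x d Aset)]

end Bernoulli

lemma iterate_shiftZ_apply (i : ℕ) (z : ℤ → Bool) (n : ℤ) : shiftZ^[i] z n = z (n + i) := by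
  induction i generalizing z with
  | zero => simp
  | succ i ih =>
    rw [Function.iterate_succ_apply, ih, shiftZ, Nat.cast_succ, add_assoc]

open scoped Classical in
lemma psi0_iterate_shiftZ_Phi (x : ℕ → Bool) (i : ℕ) :
    psi0 (shiftZ^[i] (Phi x)) = if Tod^[i] x ∈ Aset then -2 else 0 := by
  simp [psi0, iterate_shiftZ_apply, Phi, zIter]

lemma sum_psi0_iterate_shiftZ_Phi (x : ℕ → Bool) (d : ℕ) :
    ∑ i ∈ range d, psi0 (shiftZ^[i] (Phi x)) = -2 * visitCount x d Aset := by
  simp_rw [psi0_iterate_shiftZ_Phi, sum_ite, sum_const_zero, sum_const, visitCount, nsmul_eq_mul,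
    add_zero, mul_comm]

/-- for `y = Φ(x)` and every `d ∈ ℕ`,
`S_d ψ_0(y) ≤ −2 ν(A) d + 4 + 2 log₂ d`. -/
theorem stmt17 (ν : Measure (ℕ → Bool))
    (hν : ∀ (n : ℕ) (a : ℕ → Bool), ν {x | ∀ i < n, x i = a i} = (2 : ℝ≥0∞)⁻¹ ^ n)
    (x : ℕ → Bool) (d : ℕ) :
    ∑ i ∈ Finset.range d, psi0 (shiftZ^[i] (Phi x)) ≤
      -2 * (ν Aset).toReal * d + 4 + 2 * Real.logb 2 d := by
  rw [sum_psi0_iterate_shiftZ_Phi]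
  have hlog : (Nat.log 2 d : ℝ) ≤ Real.logb 2 d := by exact_mod_cast Real.natLog_le_logb d 2
  linarith [measure_Aset_mul_le hν x d]
end

section
/- With μ the unique equilibrium state of the continuous potential ψ constructed in the paper (so that P(ψ) = −2μ([β])) and o the all-β fixed point of the shift, for every n ≥ 5 the cylinder W_n of length n containing o satisfies μ([W_n]) / e^{−nP(ψ) + S_nψ(o)} > (e/2)^n. In particular the very weak Gibbs inequality fails at o. -/
open MeasureTheory Filter Topology
open scoped ENNReal

/-- The Birkhoff sum `S_n ψ(z) = Σ_{i<n} ψ(σ^i z)`. -/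
def SnZ (n : ℕ) (ψ : (ℤ → Bool) → ℝ) (z : ℤ → Bool) : ℝ :=
  ∑ i ∈ Finset.range n, ψ (shiftZ^[i] z)

/-- The agreement radius of `z` with `Y`: the largest `n` such that some `y ∈ Y` agrees
with `z` on all coordinates `|i| < n`; thus `dist(z, Y) = 2^{-mrad z}` in the metric
`d(z,z') = 2^{-min{|i| : z_i ≠ z'_i}}`. -/
noncomputable def mrad (z : ℤ → Bool) : ℕ :=
  sSup {n : ℕ | ∃ y ∈ Ysub, ∀ i : ℤ, |i| < (n : ℤ) → y i = z i}

-- `ψ_1(z) = −12/√n` when `dist(z, Y) = 2^{-n}`, and `ψ_1 = 0` on `Y`.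
open Classical in
noncomputable def psi1 (z : ℤ → Bool) : ℝ :=
  if z ∈ Ysub then 0 else -12 / Real.sqrt (mrad z)

/-- The potential `ψ = ψ_0 + ψ_1`. -/
noncomputable def psiZ (z : ℤ → Bool) : ℝ := psi0 z + psi1 z

/-- The topological pressure of a potential on the full shift,
`P(ψ) = lim (1/n) log Σ_{|w|=n} e^{sup_{z ∈ [w]} S_n ψ(z)}`. -/
noncomputable def pressZ (ψ : (ℤ → Bool) → ℝ) : ℝ :=
  Filter.atTop.limsup (fun n : ℕ =>
    (1 / (n : ℝ)) * Real.log (∑ w : Fin n → Bool, Real.exp (sSup (SnZ n ψ '' cylZ n w))))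

open Function Finset

/-!
Everything rests on `P(ψ) > -1`. The odometer maps each cylinder of length `k` bijectively onto
a cylinder of the same length, so `ν(T^{-i}A) ≤ ∑_{k ≥ 5} k 2^{-k} = 3/8`; averaging over `ν`,
some `x` has at most `3n/8` symbols `β` among `Φ(x)_0, …, Φ(x)_{n-1}`. Since `ψ_1` vanishes on
`Y ∋ Φ(x)`, this gives `S_nψ(Φ x) ≥ -3n/4`, hence `P(ψ) ≥ -3/4`. On the other side
`S_nψ(o) = -2n` as `o ∈ Y`, and `μ([W_n]) ≥ ν([0^n]) = 2^{-n}` because the first `n` odometer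
images of a point of `[0^n]` lie in `A`; so the quotient is at least
`2^{-n} e^{n(P(ψ) + 2)} > (e/2)^n`.
-/

section Causal

variable {α : Type*}

def initCyl (k : ℕ) (a : ℕ → α) : Set (ℕ → α) := {x | ∀ i < k, x i = a i}

lemma mem_initCyl_self (k : ℕ) (a : ℕ → α) : a ∈ initCyl k a := fun _ _ => rfl

lemma isOpen_initCyl [TopologicalSpace α] [DiscreteTopology α] (k : ℕ) (a : ℕ → α) :
    IsOpen (initCyl k a) := by
  have : initCyl k a = Set.pi (Set.Iio k) fun i => {a i} := by ext x; simp [initCyl]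
  rw [this]
  exact isOpen_set_pi (Set.finite_Iio k) fun _ _ => isOpen_discrete _

def IsCausal (f : (ℕ → α) → ℕ → α) : Prop :=
  ∀ k x y, x ∈ initCyl k y → f x ∈ initCyl k (f y)

namespace IsCausal

variable {f g : (ℕ → α) → ℕ → α}

lemma comp (hf : IsCausal f) (hg : IsCausal g) : IsCausal (f ∘ g) :=
  fun k x y h => hf k _ _ (hg k x y h)

lemma iterate (hf : IsCausal f) : ∀ n, IsCausal f^[n]
  | 0 => fun _ _ _ h => h
  | n + 1 => (hf.iterate n).comp hf

lemma continuous [TopologicalSpace α] [DiscreteTopology α] (hf : IsCausal f) : Continuous f := by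
  refine continuous_pi fun i => continuous_iff_continuousAt.2 fun x => ?_
  have hx : initCyl (i + 1) x ∈ 𝓝 x := (isOpen_initCyl _ x).mem_nhds (mem_initCyl_self _ x)
  exact tendsto_nhds_of_eventually_eq <|
    Filter.mem_of_superset hx fun y hy => hf (i + 1) y x hy i i.lt_succ_self

lemma preimage_initCyl (hf : IsCausal f) (hg : IsCausal g) (hgf : LeftInverse g f)
    (hfg : LeftInverse f g) (k : ℕ) (a : ℕ → α) : f ⁻¹' initCyl k a = initCyl k (g a) := by
  ext x
  refine ⟨fun hx => ?_, fun hx => ?_⟩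
  · simpa only [hgf x] using hg k _ _ hx
  · simpa only [Set.mem_preimage, hfg a] using hf k _ _ hx

end IsCausal

end Causal

section Odometer

lemma isCausal_tod : IsCausal Tod := by
  intro k x y h i hi
  have hlow : ∀ j < i, x j = y j := fun j hj => h j (hj.trans hi)
  simp +contextual only [Tod, hlow, h i hi]

lemma isCausal_todInv : IsCausal TodInv := by
  intro k x y h i hi
  have hlow : ∀ j < i, x j = y j := fun j hj => h j (hj.trans hi)
  simp +contextual only [TodInv, hlow, h i hi]

lemma forall_tod_eq_false_iff (x : ℕ → Bool) (k : ℕ) :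
    (∀ i < k, Tod x i = false) ↔ ∀ i < k, x i = true := by
  induction k with
  | zero => simp
  | succ k ih =>
    simp only [Nat.forall_lt_succ_right, ih]
    by_cases h : ∀ i < k, x i = true
    · simp [Tod, if_pos h]
    · simp only [h, false_and]

lemma forall_todInv_eq_true_iff (x : ℕ → Bool) (k : ℕ) :
    (∀ i < k, TodInv x i = true) ↔ ∀ i < k, x i = false := by
  induction k with
  | zero => simp
  | succ k ih =>
    simp only [Nat.forall_lt_succ_right, ih]
    by_cases h : ∀ i < k, x i = false
    · simp [TodInv, if_pos h]
    · simp only [h, false_and]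

lemma todInv_leftInverse : LeftInverse TodInv Tod := by
  intro x; funext k
  change (if ∀ i < k, Tod x i = false then !(Tod x k) else Tod x k) = x k
  simp only [forall_tod_eq_false_iff]
  by_cases h : ∀ i < k, x i = true
  · simp only [Tod, if_pos h, Bool.not_not]
  · simp only [Tod, if_neg h]

lemma tod_leftInverse : LeftInverse Tod TodInv := by
  intro x; funext k
  change (if ∀ i < k, TodInv x i = true then !(TodInv x k) else TodInv x k) = x k
  simp only [forall_todInv_eq_true_iff]
  by_cases h : ∀ i < k, x i = false
  · simp only [TodInv, if_pos h, Bool.not_not]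
  · simp only [TodInv, if_neg h]

lemma image_iterate_tod (j : ℕ) (s : Set (ℕ → Bool)) : Tod^[j] '' s = TodInv^[j] ⁻¹' s :=
  congrFun (Set.image_eq_preimage_of_inverse (todInv_leftInverse.iterate j)
    (tod_leftInverse.iterate j)) s

lemma zIter_natCast (i : ℕ) (x : ℕ → Bool) : zIter i x = Tod^[i] x := by
  simp [zIter]

lemma zIter_iterate_tod (m : ℤ) (i : ℕ) (x : ℕ → Bool) :
    zIter m (Tod^[i] x) = zIter (m + i) x := by
  unfold zIter
  by_cases hm : 0 ≤ m
  · rw [if_pos hm, if_pos (by omega), ← iterate_add_apply]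
    congr 1
    omega
  by_cases hmi : 0 ≤ m + i
  · have : Tod^[i] x = Tod^[(-m).toNat] (Tod^[(m + i).toNat] x) := by
      rw [← iterate_add_apply]
      congr 1
      omega
    rw [if_neg hm, if_pos hmi, this, (todInv_leftInverse.iterate _) _]
  · have : (-m).toNat = (-(m + i)).toNat + i := by omega
    rw [if_neg hm, if_neg hmi, this, iterate_add_apply, (todInv_leftInverse.iterate i) _]

end Odometer

section FactorMap

lemma cyl0_eq_initCyl (k : ℕ) : cyl0 k = initCyl k fun _ => false := rfl

lemma phi_apply_eq_true_iff (x : ℕ → Bool) (n : ℤ) : Phi x n = true ↔ zIter n x ∈ Aset := by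
  simp [Phi]

lemma iterate_tod_mem_aset {k j : ℕ} (hk : 5 ≤ k) (hj : j < k) {x : ℕ → Bool}
    (hx : x ∈ cyl0 k) : Tod^[j] x ∈ Aset := by
  simp only [Aset, Set.mem_iUnion]
  exact ⟨k, hk, j, hj, x, hx, rfl⟩

lemma shiftZ_iterate_apply (i : ℕ) (z : ℤ → Bool) (m : ℤ) : shiftZ^[i] z m = z (m + i) := by
  induction i generalizing m with
  | zero => simp
  | succ i ih =>
    rw [iterate_succ_apply', shiftZ, ih]
    push_cast
    ring_nf

lemma shiftZ_iterate_phi (x : ℕ → Bool) (i : ℕ) : shiftZ^[i] (Phi x) = Phi (Tod^[i] x) := by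
  funext m
  rw [shiftZ_iterate_apply]
  unfold Phi
  rw [zIter_iterate_tod]

lemma isCausal_zIter (n : ℤ) : IsCausal (zIter n) := by
  intro k x y h
  unfold zIter
  split_ifs
  · exact isCausal_tod.iterate _ k x y h
  · exact isCausal_todInv.iterate _ k x y h

lemma measurableSet_aset : MeasurableSet Aset := by
  refine .iUnion fun k => .iUnion fun _ => .iUnion fun j => .iUnion fun _ => ?_
  rw [image_iterate_tod]
  exact (isOpen_initCyl k fun _ => false).measurableSet.preimage
    (isCausal_todInv.iterate j).continuous.measurable

lemma measurable_phi : Measurable Phi := by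
  refine measurable_pi_lambda _ fun n => measurable_to_bool ?_
  have : (fun x => Phi x n) ⁻¹' {true} = zIter n ⁻¹' Aset := by
    ext x
    exact phi_apply_eq_true_iff x n
  rw [this]
  exact measurableSet_aset.preimage (isCausal_zIter n).continuous.measurable

lemma const_true_mem_ysub : (fun _ : ℤ => true) ∈ Ysub := by
  refine mem_closure_of_tendsto (f := fun N : ℕ => Phi (Tod^[N] fun _ => false)) (b := atTop)
    ?_ (.of_forall fun N => Set.mem_range_self _)
  refine tendsto_pi_nhds.2 fun m =>
    tendsto_atTop_of_eventually_const (i₀ := m.natAbs) fun N hN => ?_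
  have hmN : m + N = ((m + N).toNat : ℕ) := by omega
  rw [phi_apply_eq_true_iff, zIter_iterate_tod, hmN, zIter_natCast]
  exact iterate_tod_mem_aset (k := (m + N).toNat + 5) (by omega) (by omega) fun _ _ => rfl

lemma aset_subset_iUnion :
    Aset ⊆ ⋃ m : ℕ, ⋃ j ∈ range (m + 5), Tod^[j] '' cyl0 (m + 5) := by
  simp only [Aset, Set.iUnion_subset_iff]
  intro k hk j hj
  obtain ⟨m, rfl⟩ := Nat.exists_eq_add_of_le' hk
  exact Set.subset_iUnion_of_subset m
    (Set.subset_iUnion₂_of_subset j (by simpa using hj) Set.Subset.rfl)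

end FactorMap

lemma summable_natCast_mul_half_pow : Summable fun k : ℕ => (k : ℝ) * (1 / 2) ^ k := by
  simpa using summable_pow_mul_geometric_of_norm_lt_one (R := ℝ) 1 (r := 1 / 2) (by norm_num)

lemma tsum_mul_half_pow_add_five :
    ∑' m : ℕ, ((m + 5 : ℕ) : ℝ) * (1 / 2) ^ (m + 5) = 3 / 8 := by
  have h := summable_natCast_mul_half_pow.sum_add_tsum_nat_add 5
  rw [tsum_coe_mul_geometric_of_norm_lt_one (by norm_num)] at h
  norm_num [Finset.sum_range_succ] at h
  push_cast
  linarith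

section Measure

variable {ν : Measure (ℕ → Bool)} (hν : ∀ n a, ν (initCyl n a) = (2 : ℝ≥0∞)⁻¹ ^ n)
include hν

lemma isProbabilityMeasure_of_measure_initCyl : IsProbabilityMeasure ν :=
  ⟨by simpa [initCyl] using hν 0 fun _ => false⟩

lemma measure_preimage_iterate_tod_image (i j k : ℕ) :
    ν (Tod^[i] ⁻¹' (Tod^[j] '' cyl0 k)) = (2 : ℝ≥0∞)⁻¹ ^ k := by
  have hgf : LeftInverse (TodInv^[i] ∘ Tod^[j]) (TodInv^[j] ∘ Tod^[i]) := fun x => by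
    simp only [comp_apply, (tod_leftInverse.iterate j) _, (todInv_leftInverse.iterate i) _]
  have hfg : LeftInverse (TodInv^[j] ∘ Tod^[i]) (TodInv^[i] ∘ Tod^[j]) := fun x => by
    simp only [comp_apply, (tod_leftInverse.iterate i) _, (todInv_leftInverse.iterate j) _]
  rw [image_iterate_tod, ← Set.preimage_comp, cyl0_eq_initCyl, ((isCausal_todInv.iterate j).comp
    (isCausal_tod.iterate i)).preimage_initCyl ((isCausal_todInv.iterate i).comp
    (isCausal_tod.iterate j)) hgf hfg, hν]

lemma measure_preimage_iterate_tod_aset_le (i : ℕ) :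
    ν (Tod^[i] ⁻¹' Aset) ≤ ENNReal.ofReal (3 / 8) := by
  have hs : Summable fun m : ℕ => ((m + 5 : ℕ) : ℝ) * (1 / 2) ^ (m + 5) :=
    (summable_nat_add_iff (f := fun k : ℕ => (k : ℝ) * (1 / 2) ^ k) 5).2
      summable_natCast_mul_half_pow
  calc ν (Tod^[i] ⁻¹' Aset)
      ≤ ν (⋃ m : ℕ, ⋃ j ∈ range (m + 5), Tod^[i] ⁻¹' (Tod^[j] '' cyl0 (m + 5))) := by
        simp only [← Set.preimage_iUnion]
        exact measure_mono (Set.preimage_mono aset_subset_iUnion)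
    _ ≤ ∑' m : ℕ, ∑ j ∈ range (m + 5), ν (Tod^[i] ⁻¹' (Tod^[j] '' cyl0 (m + 5))) :=
        (measure_iUnion_le _).trans (ENNReal.tsum_le_tsum fun m => measure_biUnion_finset_le _ _)
    _ = ∑' m : ℕ, ENNReal.ofReal (((m + 5 : ℕ) : ℝ) * (1 / 2) ^ (m + 5)) := by
        refine tsum_congr fun m => ?_
        rw [sum_congr rfl fun j _ => measure_preimage_iterate_tod_image hν i j (m + 5), sum_const,
          card_range, nsmul_eq_mul, ENNReal.ofReal_mul (by positivity), ENNReal.ofReal_natCast,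
          ENNReal.ofReal_pow (by norm_num), one_div, ENNReal.ofReal_inv_of_pos two_pos,
          ENNReal.ofReal_ofNat]
    _ = ENNReal.ofReal (3 / 8) := by
        rw [← ENNReal.ofReal_tsum_of_nonneg (fun _ => by positivity) hs,
          tsum_mul_half_pow_add_five]

lemma exists_card_phi_eq_true_le (n : ℕ) :
    ∃ x, (#{i ∈ range n | Phi x (i : ℕ) = true} : ℝ) ≤ 3 / 8 * n := by
  have := isProbabilityMeasure_of_measure_initCyl hν
  let s : ℕ → Set (ℕ → Bool) := fun i => {x | Phi x (i : ℕ) = true}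
  have hs (i : ℕ) : MeasurableSet (s i) :=
    (measurable_pi_apply (i : ℤ)).comp measurable_phi (measurableSet_singleton true)
  let f : (ℕ → Bool) → ℝ≥0∞ := fun x => ∑ i ∈ range n, (s i).indicator 1 x
  have hcard (x) : (#{i ∈ range n | Phi x (i : ℕ) = true} : ℝ≥0∞) = f x := by
    rw [card_filter]
    push_cast
    simp only [f, s, Set.indicator_apply, Set.mem_ofPred_eq, Pi.one_apply]
  have hint : ∫⁻ x, f x ∂ν ≤ ENNReal.ofReal (3 / 8 * n) := by
    rw [lintegral_finsetSum _ fun i _ => measurable_one.indicator (hs i)]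
    calc ∑ i ∈ range n, ∫⁻ x, (s i).indicator 1 x ∂ν
        = ∑ i ∈ range n, ν (Tod^[i] ⁻¹' Aset) := by
          refine sum_congr rfl fun i _ => ?_
          rw [lintegral_indicator_one (hs i)]
          congr 1
          ext x
          simp [s, phi_apply_eq_true_iff, zIter_natCast]
      _ ≤ ∑ _i ∈ range n, ENNReal.ofReal (3 / 8) :=
          sum_le_sum fun i _ => measure_preimage_iterate_tod_aset_le hν i
      _ = ENNReal.ofReal (3 / 8 * n) := by
          rw [sum_const, card_range, nsmul_eq_mul, ENNReal.ofReal_mul (by norm_num),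
            ENNReal.ofReal_natCast, mul_comm]
  obtain ⟨x, hx⟩ := exists_le_lintegral (μ := ν)
    (Finset.measurable_sum _ fun i _ => measurable_one.indicator (hs i)).aemeasurable
  refine ⟨x, (ENNReal.ofReal_le_ofReal_iff (by positivity)).1 ?_⟩
  rw [ENNReal.ofReal_natCast, hcard]
  exact hx.trans hint

end Measure

section Pressure

noncomputable def partitionZ (ψ : (ℤ → Bool) → ℝ) (n : ℕ) : ℝ :=
  ∑ w : Fin n → Bool, Real.exp (sSup (SnZ n ψ '' cylZ n w))

variable {ψ : (ℤ → Bool) → ℝ} (hψ : ∀ z, ψ z ≤ 0)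
include hψ

lemma snZ_nonpos (n : ℕ) (z : ℤ → Bool) : SnZ n ψ z ≤ 0 :=
  sum_nonpos fun _ _ => hψ _

omit hψ in
lemma partitionZ_pos (n : ℕ) : 0 < partitionZ ψ n :=
  sum_pos (fun _ _ => Real.exp_pos _) univ_nonempty

lemma partitionZ_le_two_pow (n : ℕ) : partitionZ ψ n ≤ 2 ^ n := by
  have hle (w : Fin n → Bool) : Real.exp (sSup (SnZ n ψ '' cylZ n w)) ≤ 1 :=
    Real.exp_le_one_iff.2 <| Real.sSup_nonpos <| by
      rintro _ ⟨z, -, rfl⟩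
      exact snZ_nonpos hψ n z
  simpa [partitionZ] using sum_le_card_nsmul univ _ 1 fun w _ => hle w

lemma exp_snZ_le_partitionZ (n : ℕ) (z : ℤ → Bool) :
    Real.exp (SnZ n ψ z) ≤ partitionZ ψ n := by
  let w : Fin n → Bool := fun i => z i
  have hbdd : BddAbove (SnZ n ψ '' cylZ n w) := ⟨0, by
    rintro _ ⟨y, -, rfl⟩
    exact snZ_nonpos hψ n y⟩
  calc Real.exp (SnZ n ψ z) ≤ Real.exp (sSup (SnZ n ψ '' cylZ n w)) :=
        Real.exp_le_exp.2 (le_csSup hbdd ⟨z, fun _ => rfl, rfl⟩)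
    _ ≤ partitionZ ψ n :=
        single_le_sum (f := fun w => Real.exp (sSup (SnZ n ψ '' cylZ n w)))
          (fun _ _ => (Real.exp_pos _).le) (mem_univ w)

lemma le_pressZ {c : ℝ} (h : ∀ n, ∃ z, c * n ≤ SnZ n ψ z) : c ≤ pressZ ψ := by
  have hlog (n : ℕ) : Real.log (partitionZ ψ n) ≤ n * Real.log 2 := by
    rw [← Real.log_pow]
    exact Real.log_le_log (partitionZ_pos n) (partitionZ_le_two_pow hψ n)
  refine le_limsup_of_frequently_le (Filter.Eventually.frequently ?_)
    (Filter.isBoundedUnder_of ⟨Real.log 2, fun n => ?_⟩)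
  · filter_upwards [Filter.eventually_gt_atTop 0] with n hn
    obtain ⟨z, hz⟩ := h n
    have hn' : (0 : ℝ) < n := Nat.cast_pos.2 hn
    rw [one_div, ← div_eq_inv_mul, le_div_iff₀ hn']
    exact (Real.le_log_iff_exp_le (partitionZ_pos n)).2 <|
      (Real.exp_le_exp.2 hz).trans (exp_snZ_le_partitionZ hψ n z)
  · rcases n.eq_zero_or_pos with rfl | hn
    · simpa using Real.log_nonneg one_le_two
    · have hn' : (0 : ℝ) < n := Nat.cast_pos.2 hn
      rw [one_div, ← div_eq_inv_mul, div_le_iff₀ hn', mul_comm]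
      exact hlog n

end Pressure

section Potential

lemma psiZ_nonpos (z : ℤ → Bool) : psiZ z ≤ 0 := by
  have h1 : psi1 z ≤ 0 := by
    unfold psi1
    split_ifs
    · exact le_rfl
    · exact div_nonpos_of_nonpos_of_nonneg (by norm_num) (Real.sqrt_nonneg _)
  unfold psiZ psi0
  split_ifs <;> linarith

lemma snZ_psiZ_of_forall_mem_ysub {z : ℤ → Bool} (hz : ∀ i, shiftZ^[i] z ∈ Ysub) (n : ℕ) :
    SnZ n psiZ z = -2 * #{i ∈ range n | z (i : ℕ) = true} := by
  have hterm (i : ℕ) : psiZ (shiftZ^[i] z) = if z i = true then -2 else 0 := by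
    simp [psiZ, psi1, hz i, psi0, shiftZ_iterate_apply]
  simp only [SnZ, hterm, sum_ite, sum_const_zero, add_zero, sum_const, nsmul_eq_mul]
  ring

lemma snZ_psiZ_phi (x : ℕ → Bool) (n : ℕ) :
    SnZ n psiZ (Phi x) = -2 * #{i ∈ range n | Phi x (i : ℕ) = true} :=
  snZ_psiZ_of_forall_mem_ysub (fun i => shiftZ_iterate_phi x i ▸
    subset_closure (Set.mem_range_self _)) n

lemma snZ_psiZ_const_true (n : ℕ) : SnZ n psiZ (fun _ => true) = -2 * n := by
  have hfix (i : ℕ) : shiftZ^[i] (fun _ => true) = fun _ => true :=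
    iterate_fixed (f := shiftZ) (x := fun _ => true) rfl i
  rw [snZ_psiZ_of_forall_mem_ysub fun i => (hfix i).symm ▸ const_true_mem_ysub]
  simp

end Potential

section Main

variable {ν : Measure (ℕ → Bool)} (hν : ∀ n a, ν (initCyl n a) = (2 : ℝ≥0∞)⁻¹ ^ n)
include hν

lemma neg_three_quarters_le_pressZ_psiZ : -(3 / 4) ≤ pressZ psiZ := by
  refine le_pressZ psiZ_nonpos fun n => ?_
  obtain ⟨x, hx⟩ := exists_card_phi_eq_true_le hν n
  exact ⟨Phi x, by rw [snZ_psiZ_phi]; linarith⟩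

lemma inv_two_pow_le_map_phi_cylZ {n : ℕ} (hn : 5 ≤ n) :
    (2 : ℝ)⁻¹ ^ n ≤ (Measure.map Phi ν (cylZ n fun _ => true)).toReal := by
  have := isProbabilityMeasure_of_measure_initCyl hν
  have hW : MeasurableSet (cylZ n fun _ => true) := by
    simp only [cylZ, Set.ofPred_forall]
    exact .iInter fun i => measurable_pi_apply _ (measurableSet_singleton _)
  have hsub : cyl0 n ⊆ Phi ⁻¹' cylZ n fun _ => true := fun x hx i => by
    rw [phi_apply_eq_true_iff, zIter_natCast]
    exact iterate_tod_mem_aset hn i.isLt hx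
  have hle : (2 : ℝ≥0∞)⁻¹ ^ n ≤ Measure.map Phi ν (cylZ n fun _ => true) := by
    rw [Measure.map_apply measurable_phi hW, ← hν n fun _ => false]
    exact measure_mono hsub
  simpa using ENNReal.toReal_mono (measure_ne_top _ _) hle

end Main

/-- for the constructed potential `ψ` with unique equilibrium state
`μ = Φ_*ν`, the point `o` of all `β`'s and every `n ≥ 5`,
`μ([W_n]) / e^{−nP(ψ) + S_nψ(o)} > (e/2)^n`: the very weak Gibbs inequality fails at `o`. -/
theorem stmt18 (ν : Measure (ℕ → Bool))
    (hν : ∀ (n : ℕ) (a : ℕ → Bool), ν {x | ∀ i < n, x i = a i} = (2 : ℝ≥0∞)⁻¹ ^ n)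
    (μ : Measure (ℤ → Bool)) (hμ : μ = Measure.map Phi ν) :
    ∀ n : ℕ, 5 ≤ n →
      (Real.exp 1 / 2) ^ n <
        (μ (cylZ n fun _ => true)).toReal /
          Real.exp (-(n : ℝ) * pressZ psiZ + SnZ n psiZ fun _ => true) := by
  intro n hn
  have hP : -(3 / 4) ≤ pressZ psiZ := neg_three_quarters_le_pressZ_psiZ hν
  have hW : (2 : ℝ)⁻¹ ^ n ≤ (μ (cylZ n fun _ => true)).toReal :=
    hμ ▸ inv_two_pow_le_map_phi_cylZ hν hn
  have hexp : Real.exp (-(n * (pressZ psiZ + 1))) < 1 := by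
    have : (0 : ℝ) < n := by norm_cast; omega
    exact Real.exp_lt_one_iff.2 (by nlinarith)
  rw [snZ_psiZ_const_true, lt_div_iff₀ (Real.exp_pos _)]
  calc (Real.exp 1 / 2) ^ n * Real.exp (-n * pressZ psiZ + -2 * n)
      = (2 : ℝ)⁻¹ ^ n * Real.exp (-(n * (pressZ psiZ + 1))) := by
        rw [div_pow, Real.exp_one_pow, div_eq_mul_inv, ← inv_pow, mul_right_comm, ← Real.exp_add]
        ring_nf
    _ < (2 : ℝ)⁻¹ ^ n := mul_lt_of_lt_one_right (by positivity) hexp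
    _ ≤ (μ (cylZ n fun _ => true)).toReal := hW
end
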